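/- arXiv:2209.08785 — 2 statements merged into one kernel-verified Lean document; each statement's English description precedes it below -/
import Mathlib

section
/- Let Φ be a square matrix with spectral radius ρ(Φ) < 1, and let c : ℕ → ℝⁿ with lim_{t→∞} c(t) = 0. Then lim_{t→∞} ∑_{k=0}^{t-1} Φ^k c(t-1-k) = 0. -/
/-!
Gelfand's formula `‖Φ ^ k‖ ^ (1 / k) → ρ(Φ)` bounds `‖Φ ^ k‖` eventually by `r ^ k` for some
`ρ(Φ) < r < 1`, so the operator norms of the powers of `Φ` are summable. A convolution of a summable
kernel with a null sequence is null: for each fixed `k` the `k`-th term tends to zero, and the terms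
are dominated by a summable sequence, so Tannery's theorem applies.
-/

open Filter Topology

theorem summable_norm_pow_of_spectralRadius_lt_one {A : Type*} [NormedRing A] [NormedAlgebra ℂ A]
    [CompleteSpace A] {a : A} (ha : spectralRadius ℂ a < 1) : Summable fun k => ‖a ^ k‖ := by
  obtain ⟨r, har, hr1⟩ := ENNReal.lt_iff_exists_nnreal_btwn.mp ha
  have hr1 : (r : ℝ) < 1 := by exact_mod_cast hr1
  have hroot : ∀ᶠ k : ℕ in atTop, ‖a ^ k‖ ^ (1 / k : ℝ) < r := by
    filter_upwards [(spectrum.pow_norm_pow_one_div_tendsto_nhds_spectralRadius a).eventually_lt_const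
      har] with k hk
    exact (ENNReal.ofReal_lt_coe_iff (by positivity)).mp hk
  refine (summable_geometric_of_lt_one r.2 hr1).of_norm_bounded_eventually_nat ?_
  filter_upwards [hroot, eventually_ne_atTop 0] with k hk hk0
  rw [norm_norm, ← Real.rpow_inv_natCast_pow (norm_nonneg (a ^ k)) hk0, ← one_div]
  exact pow_le_pow_left₀ (by positivity) hk.le k

namespace Matrix

attribute [local instance] Matrix.linftyOpNormedAddCommGroup Matrix.linftyOpNormedRing
  Matrix.linftyOpNormedAlgebra

variable {ι : Type*} [Fintype ι]

theorem linfty_opNorm_map_ofReal (M : Matrix ι ι ℝ) : ‖M.map ((↑) : ℝ → ℂ)‖ = ‖M‖ := by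
  simp [linfty_opNorm_def]

variable [DecidableEq ι]

theorem summable_linfty_opNorm_pow_of_spectrum_ofReal {Φ : Matrix ι ι ℝ}
    (hρ : ∀ z ∈ spectrum ℂ (Φ.map ((↑) : ℝ → ℂ)), ‖z‖ < 1) : Summable fun k => ‖Φ ^ k‖ := by
  cases isEmpty_or_nonempty ι
  · simpa only [Subsingleton.elim (Φ ^ _) 0, norm_zero] using summable_zero
  have hsr : spectralRadius ℂ (Φ.map ((↑) : ℝ → ℂ)) < 1 := by
    simpa using spectrum.spectralRadius_lt_of_forall_lt _ (r := 1) fun z hz => by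
      simpa [← NNReal.coe_lt_coe] using hρ z hz
  have hpow (k : ℕ) : Φ.map ((↑) : ℝ → ℂ) ^ k = (Φ ^ k).map (↑) :=
    (Φ.map_pow Complex.ofRealHom k).symm
  simpa only [hpow, linfty_opNorm_map_ofReal] using summable_norm_pow_of_spectralRadius_lt_one hsr

theorem exists_summable_bound_pow_mulVec {Φ : Matrix ι ι ℝ}
    (hρ : ∀ z ∈ spectrum ℂ (Φ.map ((↑) : ℝ → ℂ)), ‖z‖ < 1) :
    ∃ b : ℕ → ℝ, Summable b ∧ ∀ k v, ‖(Φ ^ k) *ᵥ v‖ ≤ b k * ‖v‖ :=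
  ⟨_, summable_linfty_opNorm_pow_of_spectrum_ofReal hρ, fun _ _ => linfty_opNorm_mulVec _ _⟩

end Matrix

theorem tendsto_sum_range_mul_of_summable_of_tendsto_zero {b d : ℕ → ℝ} (hb : Summable b)
    (hd : Tendsto d atTop (𝓝 0)) :
    Tendsto (fun t => ∑ k ∈ Finset.range t, b k * d (t - 1 - k)) atTop (𝓝 0) := by
  obtain ⟨D, hD⟩ : ∃ D, ∀ t, ‖d t‖ ≤ D := by
    obtain ⟨D, hD⟩ := hd.norm.bddAbove_range
    exact ⟨D, fun t => hD ⟨t, rfl⟩⟩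
  set F : ℕ → ℕ → ℝ := fun t k => if k < t then b k * d (t - 1 - k) else 0
  have hsum (t : ℕ) : ∑ k ∈ Finset.range t, b k * d (t - 1 - k) = ∑' k, F t k := by
    rw [tsum_eq_sum (s := Finset.range t) fun k hk => if_neg (by simpa using hk)]
    exact Finset.sum_congr rfl fun k hk => (if_pos (Finset.mem_range.mp hk)).symm
  have hF (k : ℕ) : Tendsto (F · k) atTop (𝓝 0) := by
    have hlim : Tendsto (fun t => b k * d (t - 1 - k)) atTop (𝓝 0) := by
      simpa using (hd.comp ((tendsto_sub_atTop_nat k).comp (tendsto_sub_atTop_nat 1))).const_mul (b k)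
    exact hlim.congr' <| (eventually_gt_atTop k).mono fun t ht => (if_pos ht).symm
  have hbound (t k : ℕ) : ‖F t k‖ ≤ ‖b k‖ * D := by
    simp only [F]
    split_ifs
    · rw [norm_mul]; exact mul_le_mul_of_nonneg_left (hD _) (norm_nonneg _)
    · rw [norm_zero]; exact mul_nonneg (norm_nonneg _) ((norm_nonneg _).trans (hD 0))
  simpa [hsum] using tendsto_tsum_of_dominated_convergence (hb.norm.mul_right D) hF
    (Eventually.of_forall hbound)

theorem tendsto_sum_range_apply_of_summable_of_tendsto_zero {E F : Type*}
    [SeminormedAddCommGroup E] [SeminormedAddCommGroup F] (f : ℕ → E → F) {b : ℕ → ℝ}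
    (hb : Summable b) (hfb : ∀ k v, ‖f k v‖ ≤ b k * ‖v‖) {c : ℕ → E}
    (hc : Tendsto c atTop (𝓝 0)) :
    Tendsto (fun t => ∑ k ∈ Finset.range t, f k (c (t - 1 - k))) atTop (𝓝 0) := by
  rw [tendsto_zero_iff_norm_tendsto_zero] at hc ⊢
  refine squeeze_zero (fun t => norm_nonneg _) (fun t => ?_)
    (tendsto_sum_range_mul_of_summable_of_tendsto_zero hb hc)
  exact (norm_sum_le _ _).trans (Finset.sum_le_sum fun k _ => hfb k _)

theorem stmt_2 {n : ℕ} (Φ : Matrix (Fin n) (Fin n) ℝ) (c : ℕ → Fin n → ℝ)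
    (hρ : ∀ z ∈ spectrum ℂ (Φ.map (fun x => (x : ℂ))), ‖z‖ < 1)
    (hc : Tendsto c atTop (nhds 0)) :
    Tendsto (fun t => ∑ k ∈ Finset.range t, (Φ ^ k).mulVec (c (t - 1 - k)))
      atTop (nhds 0) := by
  obtain ⟨b, hb, hbound⟩ := Matrix.exists_summable_bound_pow_mulVec hρ
  exact tendsto_sum_range_apply_of_summable_of_tendsto_zero _ hb hbound hc
end

section
/- Consider the MAS x(t+1) = (I_M ⊗ A + L ⊗ BK) x(t), where L is the Laplacian of a connected undirected graph with eigenvalues 0 = λ₁ < λ₂ ≤ ⋯ ≤ λ_M. If ρ(A + λᵢ BK) < 1 for all i = 2,…,M, then for every initial condition x(0), the distance of x(t) to the consensus set C tends to zero as t → ∞, i.e., ‖xᵢ(t) − xⱼ(t)‖ → 0 for all pairs i,j. -/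
/-!
Conjugating by the orthogonal matrix `Uᵀ ⊗ I`, which diagonalises `L`, turns the network matrix
`I ⊗ A + L ⊗ BK` into the block diagonal matrix with blocks `A + λₚ BK`. For `p ≠ 0` the mode
`p` decays, because by Gelfand's formula the powers of a matrix of spectral radius `< 1` tend
to zero. The mode `p = 0` need not decay, but it enters every agent with the same weight
`U i 0 = 1 / √M`, so it cancels in `xᵢ - xⱼ`.
-/

open Filter Matrix Topology
open scoped Kronecker NNReal

theorem tendsto_pow_atTop_nhds_zero_of_spectralRadius_lt_one {A : Type*} [NormedRing A]
    [NormedAlgebra ℂ A] [CompleteSpace A] {a : A} (h : spectralRadius ℂ a < 1) :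
    Tendsto (a ^ ·) atTop (𝓝 0) := by
  obtain ⟨c, hac, hc1⟩ := exists_between h
  lift c to ℝ≥0 using (hc1.trans_le le_top).ne
  have hpow : ∀ᶠ t : ℕ in atTop, ‖a ^ t‖ ≤ (c : ℝ) ^ t := by
    have hgelfand := spectrum.pow_nnnorm_pow_one_div_tendsto_nhds_spectralRadius a
    filter_upwards [hgelfand.eventually_lt_const hac, eventually_gt_atTop 0] with t ht ht0
    have : (‖a ^ t‖₊ : ENNReal) < (c : ENNReal) ^ t := by
      have := ENNReal.rpow_lt_rpow ht (by positivity : (0 : ℝ) < t)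
      rwa [← ENNReal.rpow_mul, one_div, inv_mul_cancel₀ (by positivity), ENNReal.rpow_one,
        ENNReal.rpow_natCast] at this
    exact_mod_cast this.le
  exact squeeze_zero_norm' hpow
    (tendsto_pow_atTop_nhds_zero_of_lt_one c.coe_nonneg (mod_cast hc1))

namespace Matrix

theorem tendsto_pow_atTop_nhds_zero_of_forall_mem_spectrum_norm_lt_one {ι : Type*} [Fintype ι]
    [DecidableEq ι] (N : Matrix ι ι ℝ) (h : ∀ z ∈ spectrum ℂ (N.map ((↑) : ℝ → ℂ)), ‖z‖ < 1) :
    Tendsto (N ^ ·) atTop (𝓝 0) := by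
  rcases isEmpty_or_nonempty ι with hι | hι
  · simp [Subsingleton.elim _ (0 : Matrix ι ι ℝ)]
  let : NormedRing (Matrix ι ι ℂ) := Matrix.linftyOpNormedRing
  let : NormedAlgebra ℂ (Matrix ι ι ℂ) := Matrix.linftyOpNormedAlgebra
  have : CompleteSpace (Matrix ι ι ℂ) := FiniteDimensional.complete ℂ _
  have hρ : spectralRadius ℂ (N.map ((↑) : ℝ → ℂ)) < 1 := by
    simpa using spectrum.spectralRadius_lt_of_forall_lt (N.map ((↑) : ℝ → ℂ)) (r := 1)
      fun z hz => by simpa [← NNReal.coe_lt_coe] using h z hz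
  have hre : Continuous fun P : Matrix ι ι ℂ => P.map Complex.re :=
    continuous_id.matrix_map Complex.continuous_re
  have hmap : ∀ t : ℕ, ((N.map ((↑) : ℝ → ℂ)) ^ t).map Complex.re = N ^ t := fun t => by
    rw [show N.map ((↑) : ℝ → ℂ) = (algebraMap ℝ ℂ).mapMatrix N from rfl, ← map_pow]
    ext; simp
  simpa [Function.comp_def, hmap] using
    (hre.tendsto 0).comp (tendsto_pow_atTop_nhds_zero_of_spectralRadius_lt_one hρ)

variable {R ι κ : Type*} [CommRing R]

theorem eq_pow_mulVec_of_forall_succ [Fintype ι] [DecidableEq ι] {G : Matrix ι ι R}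
    {x : ℕ → ι → R} (hx : ∀ t, x (t + 1) = G *ᵥ x t) (t : ℕ) : x t = G ^ t *ᵥ x 0 := by
  induction t with
  | zero => simp
  | succ t ih => rw [hx, ih, mulVec_mulVec, pow_succ']

theorem reindex_pow [Fintype ι] [DecidableEq ι] [Fintype κ] [DecidableEq κ] (e : ι ≃ κ)
    (M : Matrix ι ι R) (t : ℕ) : reindex e e M ^ t = reindex e e (M ^ t) := by
  simpa using (map_pow (reindexAlgEquiv R R e) M t).symm

theorem one_kronecker_add_diagonal_kronecker [DecidableEq ι] [DecidableEq κ]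
    (A F : Matrix κ κ R) (lam : ι → R) :
    1 ⊗ₖ A + diagonal lam ⊗ₖ F = reindex (Equiv.prodComm κ ι) (Equiv.prodComm κ ι)
      (blockDiagonal fun p => A + lam p • F) := by
  ext ⟨p, k⟩ ⟨q, l⟩
  by_cases hpq : p = q
  · subst hpq; simp [blockDiagonal_apply]
  · simp [blockDiagonal_apply, hpq]

theorem one_kronecker_add_diagonal_kronecker_pow_mulVec_apply [Fintype ι] [DecidableEq ι]
    [Fintype κ] [DecidableEq κ] (A F : Matrix κ κ R) (lam : ι → R) (t : ℕ) (v : ι × κ → R)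
    (p : ι) (k : κ) :
    ((1 ⊗ₖ A + diagonal lam ⊗ₖ F) ^ t *ᵥ v) (p, k) =
      ((A + lam p • F) ^ t *ᵥ fun l => v (p, l)) k := by
  rw [one_kronecker_add_diagonal_kronecker, reindex_pow, ← blockDiagonal_pow]
  simp [mulVec, dotProduct, Fintype.sum_prod_type, blockDiagonal_apply, -blockDiagonal_pow]

theorem semiconjBy_kronecker_one_one_kronecker_add_kronecker [Fintype ι] [DecidableEq ι]
    [Fintype κ] [DecidableEq κ] {P L D : Matrix ι ι R} (hPL : P * L = D * P)
    (A F : Matrix κ κ R) :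
    SemiconjBy (P ⊗ₖ 1) (1 ⊗ₖ A + L ⊗ₖ F) (1 ⊗ₖ A + D ⊗ₖ F) := by
  simp only [SemiconjBy, Matrix.mul_add, Matrix.add_mul, ← mul_kronecker_mul, Matrix.mul_one,
    Matrix.one_mul, hPL]

theorem one_kronecker_add_kronecker_pow_of_transpose_mul_mul_eq_diagonal [Fintype ι]
    [DecidableEq ι] [Fintype κ] [DecidableEq κ] {U L : Matrix ι ι R} {lam : ι → R}
    (hU : Uᵀ * U = 1) (hdiag : Uᵀ * L * U = diagonal lam) (A F : Matrix κ κ R) (t : ℕ) :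
    (1 ⊗ₖ A + L ⊗ₖ F) ^ t = U ⊗ₖ 1 * (1 ⊗ₖ A + diagonal lam ⊗ₖ F) ^ t * Uᵀ ⊗ₖ 1 := by
  have hUUt : U * Uᵀ = 1 := mul_eq_one_comm.mp hU
  have hLU : Uᵀ * L = diagonal lam * Uᵀ := by
    rw [← hdiag, Matrix.mul_assoc (Uᵀ * L), hUUt, Matrix.mul_one]
  rw [Matrix.mul_assoc,
    ← ((semiconjBy_kronecker_one_one_kronecker_add_kronecker hLU A F).pow_right t).eq,
    ← Matrix.mul_assoc, ← mul_kronecker_mul, hUUt, Matrix.one_mul, one_kronecker_one,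
    Matrix.one_mul]

theorem kronecker_one_mulVec_sub_kronecker_one_mulVec [Fintype ι] [Fintype κ] [DecidableEq κ]
    (U : Matrix ι ι R) (w : ι × κ → R) (i j : ι) :
    (fun k => (U ⊗ₖ (1 : Matrix κ κ R) *ᵥ w) (i, k) - (U ⊗ₖ (1 : Matrix κ κ R) *ᵥ w) (j, k)) =
      ∑ p, (U i p - U j p) • fun k => w (p, k) := by
  ext k
  simp [mulVec, dotProduct, Fintype.sum_prod_type, one_apply, ← Finset.sum_sub_distrib, sub_mul]

end Matrix

theorem stmt_8_general {n m M : ℕ} [NeZero M]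
    (A : Matrix (Fin n) (Fin n) ℝ) (B : Matrix (Fin n) (Fin m) ℝ)
    (K : Matrix (Fin m) (Fin n) ℝ)
    (L U : Matrix (Fin M) (Fin M) ℝ) (lam : Fin M → ℝ)
    (hU : Uᵀ * U = 1)
    (hUcol : ∀ i : Fin M, U i 0 = 1 / Real.sqrt M)
    (hdiag : Uᵀ * L * U = Matrix.diagonal lam)
    (hρ : ∀ i : Fin M, i ≠ 0 →
      ∀ z ∈ spectrum ℂ ((A + lam i • (B * K)).map (fun x => (x : ℂ))), ‖z‖ < 1)
    (x : ℕ → Fin M × Fin n → ℝ)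
    (hdyn : ∀ t, x (t + 1) =
      ((1 : Matrix (Fin M) (Fin M) ℝ) ⊗ₖ A + L ⊗ₖ (B * K)).mulVec (x t)) :
    ∀ i j : Fin M,
      Tendsto (fun t => (fun k : Fin n => x t (i, k) - x t (j, k)))
        atTop (nhds 0) := by
  intro i j
  set H := (1 : Matrix (Fin M) (Fin M) ℝ) ⊗ₖ A + diagonal lam ⊗ₖ (B * K)
  set y₀ := (Uᵀ ⊗ₖ (1 : Matrix (Fin n) (Fin n) ℝ)) *ᵥ x 0
  have hx : ∀ t, x t = (U ⊗ₖ (1 : Matrix (Fin n) (Fin n) ℝ)) *ᵥ (H ^ t *ᵥ y₀) := fun t => by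
    rw [eq_pow_mulVec_of_forall_succ hdyn t,
      one_kronecker_add_kronecker_pow_of_transpose_mul_mul_eq_diagonal hU hdiag,
      ← mulVec_mulVec, ← mulVec_mulVec]
  have hmode : ∀ p, Tendsto (fun t => (U i p - U j p) • fun k => (H ^ t *ᵥ y₀) (p, k))
      atTop (𝓝 0) := by
    intro p
    by_cases hp : p = 0
    · simp [hp, hUcol]
    simp only [H, one_kronecker_add_diagonal_kronecker_pow_mulVec_apply]
    simpa [Function.comp_def] using
      (((continuous_id.matrix_mulVec continuous_const).tendsto 0).comp
        ((A + lam p • (B * K)).tendsto_pow_atTop_nhds_zero_of_forall_mem_spectrum_norm_lt_one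
          (hρ p hp))).const_smul (U i p - U j p)
  have hsum := tendsto_finsetSum Finset.univ fun p _ => hmode p
  rw [Finset.sum_const_zero] at hsum
  refine hsum.congr fun t => ?_
  rw [hx t, kronecker_one_mulVec_sub_kronecker_one_mulVec]

theorem stmt_8 {n m M : ℕ} [NeZero M]
    (A : Matrix (Fin n) (Fin n) ℝ) (B : Matrix (Fin n) (Fin m) ℝ)
    (K : Matrix (Fin m) (Fin n) ℝ)
    (L U : Matrix (Fin M) (Fin M) ℝ) (lam : Fin M → ℝ)
    (hLsym : L.IsSymm)
    (hLones : L.mulVec (fun _ => (1 : ℝ)) = 0)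
    (hU : Uᵀ * U = 1)
    (hUcol : ∀ i : Fin M, U i 0 = 1 / Real.sqrt M)
    (hdiag : Uᵀ * L * U = Matrix.diagonal lam)
    (hlam0 : lam 0 = 0)
    (hρ : ∀ i : Fin M, i ≠ 0 →
      ∀ z ∈ spectrum ℂ ((A + lam i • (B * K)).map (fun x => (x : ℂ))), ‖z‖ < 1)
    (x : ℕ → Fin M × Fin n → ℝ)
    (hdyn : ∀ t, x (t + 1) =
      ((1 : Matrix (Fin M) (Fin M) ℝ) ⊗ₖ A + L ⊗ₖ (B * K)).mulVec (x t)) :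
    ∀ i j : Fin M,
      Tendsto (fun t => (fun k : Fin n => x t (i, k) - x t (j, k)))
        atTop (nhds 0) :=
  stmt_8_general A B K L U lam hU hUcol hdiag hρ x hdyn
end
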